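/- Fix n ≥ 1, integral q ∈ ℤ^n, and S ⊆ {2,...,n}. Define q(S) by q(S)_1 = q_1, q(S)_i = q_i - 1/(2(n-i+1)) for i ∈ S, and q(S)_i = q_i + 1/(2(n-i+1)) for i ∉ S ∪ {1}; set q^± = q(S) ± (1/(2n)) e^1. Then an integral bid b ∈ ℤ^n demands different goods at q^- and q^+ if and only if b_1 = q_1 and b ≤ q(S) componentwise, and any such bid uniquely demands good 1 at q^- and the reject good 0 at q^+. -/
import Mathlib


/-- Utility of a bid `b` at price `p` for good `i`, where `none` is the reject good 0. -/
def util {n : ℕ} (b : Fin n → ℤ) (p : Fin n → ℝ) : Option (Fin n) → ℝ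
  | Option.none => 0
  | Option.some k => (b k : ℝ) - p k

/-- Bid `b` uniquely demands good `i` at price `p`. -/
def UDem {n : ℕ} (b : Fin n → ℤ) (p : Fin n → ℝ) (i : Option (Fin n)) : Prop :=
  ∀ j, j ≠ i → util b p j < util b p i

/-- The perturbed price `q(S)`: coordinates in `S` are perturbed downwards, the other
coordinates (except the first) upwards. -/
noncomputable def qpertS (n : ℕ) (q : Fin n → ℤ) (S : Finset (Fin n)) : Fin n → ℝ := fun k =>
  (q k : ℝ) +
    (if k.val = 0 then 0
     else if k ∈ S then -(1 / (2 * ((n - k.val : ℕ) : ℝ)))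
     else 1 / (2 * ((n - k.val : ℕ) : ℝ)))

noncomputable def qplusS (n : ℕ) (q : Fin n → ℤ) (S : Finset (Fin n)) : Fin n → ℝ := fun k =>
  qpertS n q S k + (if k.val = 0 then 1 / (2 * (n : ℝ)) else 0)

noncomputable def qminusS (n : ℕ) (q : Fin n → ℤ) (S : Finset (Fin n)) : Fin n → ℝ := fun k =>
  qpertS n q S k - (if k.val = 0 then 1 / (2 * (n : ℝ)) else 0)

theorem stmt_5 (n : ℕ) (hn : 0 < n) (q b : Fin n → ℤ) (S : Finset (Fin n))
    (hS : ∀ k ∈ S, k.val ≠ 0) :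
    ((∃ i j : Option (Fin n), i ≠ j ∧
        UDem b (qminusS n q S) i ∧ UDem b (qplusS n q S) j) ↔
      (b ⟨0, hn⟩ = q ⟨0, hn⟩ ∧ ∀ k, (b k : ℝ) ≤ qpertS n q S k)) ∧
    ((b ⟨0, hn⟩ = q ⟨0, hn⟩ ∧ ∀ k, (b k : ℝ) ≤ qpertS n q S k) →
      UDem b (qminusS n q S) (some ⟨0, hn⟩) ∧ UDem b (qplusS n q S) none) := by
  set z : Fin n := ⟨0, hn⟩ with hzdef
  have hz0 : z.val = 0 := rfl
  have hkz : ∀ k : Fin n, k.val = 0 → k = z := fun k h => Fin.ext h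
  have hn1 : (1:ℝ) ≤ (n:ℝ) := by exact_mod_cast hn
  have hd : (0:ℝ) < 1/(2*(n:ℝ)) := by positivity
  have hd2 : 1/(2*(n:ℝ)) ≤ 1/2 := by
    rw [div_le_div_iff₀ (by linarith) (by norm_num)]; linarith
  have he : ∀ k : Fin n, k.val ≠ 0 →
      0 < 1/(2*((n - k.val : ℕ):ℝ)) ∧ 1/(2*((n - k.val : ℕ):ℝ)) ≤ 1/2 ∧
      1/(2*(n:ℝ)) < 1/(2*((n - k.val : ℕ):ℝ)) ∧ 1/(2*(n:ℝ)) ≤ 1/4 := by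
    intro k hk
    have hlt := k.isLt
    have h1 : 1 ≤ n - k.val := by omega
    have h2 : n - k.val < n := by omega
    have hn2 : 2 ≤ n := by omega
    have h1' : (1:ℝ) ≤ ((n - k.val : ℕ):ℝ) := by exact_mod_cast h1
    have h2' : ((n - k.val : ℕ):ℝ) < n := by exact_mod_cast h2
    have hn2' : (2:ℝ) ≤ n := by exact_mod_cast hn2
    refine ⟨by positivity, ?_, ?_, ?_⟩
    · rw [div_le_div_iff₀ (by linarith) (by norm_num)]; linarith
    · rw [div_lt_div_iff₀ (by linarith) (by linarith)]; linarith
    · rw [div_le_div_iff₀ (by linarith) (by norm_num)]; linarith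
  have hqz : qpertS n q S z = q z := by simp [qpertS, hz0]
  have hqmz : qminusS n q S z = (q z : ℝ) - 1/(2*(n:ℝ)) := by
    simp [qminusS, hqz, hz0]
  have hqpz : qplusS n q S z = (q z : ℝ) + 1/(2*(n:ℝ)) := by
    simp [qplusS, hqz, hz0]
  have hqS : ∀ k : Fin n, k.val ≠ 0 → k ∈ S →
      qpertS n q S k = (q k : ℝ) - 1/(2*((n - k.val : ℕ):ℝ)) := by
    intro k hk hkS; simp [qpertS, hk, hkS]; ring
  have hqN : ∀ k : Fin n, k.val ≠ 0 → k ∉ S →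
      qpertS n q S k = (q k : ℝ) + 1/(2*((n - k.val : ℕ):ℝ)) := by
    intro k hk hkS; simp [qpertS, hk, hkS]
  have hum : ∀ k : Fin n, k.val ≠ 0 → qminusS n q S k = qpertS n q S k := by
    intro k hk; simp [qminusS, hk]
  have hup : ∀ k : Fin n, k.val ≠ 0 → qplusS n q S k = qpertS n q S k := by
    intro k hk; simp [qplusS, hk]
  have hus : ∀ (p : Fin n → ℝ) (k : Fin n), util b p (some k) = (b k:ℝ) - p k :=
    fun _ _ => rfl
  have hun : ∀ (p : Fin n → ℝ), util b p none = 0 := fun _ => rfl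
  have hueq : ∀ l : Option (Fin n), l ≠ some z →
      util b (qminusS n q S) l = util b (qplusS n q S) l := by
    intro l hl
    match l with
    | none => rfl
    | some k =>
      have hk : k.val ≠ 0 := fun h => hl (by rw [hkz k h])
      simp [util, hum k hk, hup k hk]
  -- part 2
  have main : (b z = q z ∧ ∀ k, (b k : ℝ) ≤ qpertS n q S k) →
      UDem b (qminusS n q S) (some z) ∧ UDem b (qplusS n q S) none := by
    rintro ⟨hb0, hble⟩
    have hb0' : (b z : ℝ) = (q z : ℝ) := by exact_mod_cast hb0
    have hneg : ∀ k : Fin n, k.val ≠ 0 → (b k : ℝ) - qpertS n q S k < 0 := by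
      intro k hk
      obtain ⟨he1, he2, he3, he4⟩ := he k hk
      have hb := hble k
      by_cases hkS : k ∈ S
      · rw [hqS k hk hkS] at hb ⊢
        have hc : ((b k - q k : ℤ) : ℝ) < 0 := by push_cast; linarith
        have hc' : b k - q k ≤ -1 := by
          have : b k - q k < 0 := by exact_mod_cast hc
          omega
        have hc'' : ((b k : ℝ)) - q k ≤ -1 := by exact_mod_cast hc'
        linarith
      · rw [hqN k hk hkS] at hb ⊢
        have hc : ((b k - q k : ℤ) : ℝ) < 1 := by push_cast; linarith
        have hc' : b k - q k ≤ 0 := by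
          have : b k - q k < 1 := by exact_mod_cast hc
          omega
        have hc'' : ((b k : ℝ)) - q k ≤ 0 := by exact_mod_cast hc'
        linarith
    constructor
    · intro j hj
      have hz' : util b (qminusS n q S) (some z) = 1/(2*(n:ℝ)) := by
        simp only [util, hqmz, hb0']; ring
      rw [hz']
      match j with
      | none => exact hd
      | some k =>
        have hk : k.val ≠ 0 := fun h => hj (by rw [hkz k h])
        have := hneg k hk
        simp only [util, hum k hk]
        linarith
    · intro j hj
      match j with
      | none => exact absurd rfl hj
      | some k =>
        by_cases hk : k.val = 0
        · have : k = z := hkz k hk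
          subst this
          simp only [util, hqpz, hb0']
          linarith
        · have := hneg k hk
          simp only [util, hup k hk]
          show _ < (0:ℝ)
          linarith
  refine ⟨⟨?_, fun h => ⟨some z, none, by simp, main h⟩⟩, main⟩
  rintro ⟨i, j, hij, hi, hj⟩
  -- Step 1 : i = some z
  have hiz : i = some z := by
    by_contra hiz
    have hi' : UDem b (qplusS n q S) i := by
      intro l hl
      rcases eq_or_ne l (some z) with rfl | hlz
      · have h1 := hi (some z) (Ne.symm hiz)
        have h2 : util b (qplusS n q S) (some z) < util b (qminusS n q S) (some z) := by
          simp only [util, hqmz, hqpz]; linarith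
        rw [← hueq i hiz]
        linarith
      · rw [← hueq l hlz, ← hueq i hiz]
        exact hi l hl
    have h1 := hi' j (Ne.symm hij)
    have h2 := hj i hij
    linarith
  subst hiz
  have hjz : j ≠ some z := Ne.symm hij
  have h0 : (0:ℝ) < (b z : ℝ) - (q z : ℝ) + 1/(2*(n:ℝ)) := by
    have := hi none (by simp)
    simp only [util, hqmz] at this
    linarith
  have hlow : (b z : ℝ) - (q z : ℝ) - 1/(2*(n:ℝ)) < util b (qplusS n q S) j := by
    have := hj (some z) hij
    rw [hus, hqpz] at this
    linarith
  have hhigh : util b (qplusS n q S) j < (b z : ℝ) - (q z : ℝ) + 1/(2*(n:ℝ)) := by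
    rw [← hueq j hjz]
    have := hi j hjz
    rw [hus, hqmz] at this
    linarith
  have hjnone : j = none ∧ b z = q z := by
    match j with
    | none =>
      refine ⟨rfl, ?_⟩
      rw [hun] at hlow hhigh
      have h1 : ((b z - q z : ℤ):ℝ) < 1 := by push_cast; linarith
      have h2 : (-1:ℝ) < ((b z - q z : ℤ):ℝ) := by push_cast; linarith
      have h1' : b z - q z < 1 := by exact_mod_cast h1
      have h2' : -1 < b z - q z := by exact_mod_cast h2
      omega
    | some k =>
      exfalso
      have hk : k.val ≠ 0 := fun h => hjz (by rw [hkz k h])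
      obtain ⟨he1, he2, he3, he4⟩ := he k hk
      simp only [util, hup k hk] at hlow hhigh
      by_cases hkS : k ∈ S
      · rw [hqS k hk hkS] at hlow hhigh
        have h1 : ((b k - q k - (b z - q z) : ℤ):ℝ) < 0 := by push_cast; linarith
        have h2 : (-1:ℝ) < ((b k - q k - (b z - q z) : ℤ):ℝ) := by push_cast; linarith
        have h1' : b k - q k - (b z - q z) < 0 := by exact_mod_cast h1
        have h2' : -1 < b k - q k - (b z - q z) := by exact_mod_cast h2
        omega
      · rw [hqN k hk hkS] at hlow hhigh
        have h1 : ((b k - q k - (b z - q z) : ℤ):ℝ) < 1 := by push_cast; linarith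
        have h2 : (0:ℝ) < ((b k - q k - (b z - q z) : ℤ):ℝ) := by push_cast; linarith
        have h1' : b k - q k - (b z - q z) < 1 := by exact_mod_cast h1
        have h2' : 0 < b k - q k - (b z - q z) := by exact_mod_cast h2
        omega
  obtain ⟨hj0, hbz⟩ := hjnone
  refine ⟨hbz, ?_⟩
  have hbz' : (b z : ℝ) = (q z : ℝ) := by exact_mod_cast hbz
  intro k
  by_cases hk : k.val = 0
  · have : k = z := hkz k hk
    subst this
    rw [hqz, hbz']
  · obtain ⟨he1, he2, he3, he4⟩ := he k hk
    have hkk := hi (some k) (fun h => hk (by rw [Option.some_inj] at h; rw [h]))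
    simp only [util, hum k hk, hqmz] at hkk
    by_cases hkS : k ∈ S
    · rw [hqS k hk hkS] at hkk ⊢
      have h1 : ((b k - q k : ℤ):ℝ) < 0 := by push_cast; linarith
      have h1' : b k - q k ≤ -1 := by
        have : b k - q k < 0 := by exact_mod_cast h1
        omega
      have h1'' : ((b k :ℝ)) - q k ≤ -1 := by exact_mod_cast h1'
      linarith
    · rw [hqN k hk hkS] at hkk ⊢
      have h1 : ((b k - q k : ℤ):ℝ) < 1 := by push_cast; linarith
      have h1' : b k - q k ≤ 0 := by
        have : b k - q k < 1 := by exact_mod_cast h1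
        omega
      have h1'' : ((b k :ℝ)) - q k ≤ 0 := by exact_mod_cast h1'
      linarith
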